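/- Let n ∈ ℕ₊ and let B_n be the binomial bound matrix of size (n+1)×(n+1). For every integer l ≥ 1 and every i ∈ {0, …, n}, the L1 norm of B_n^l applied to the standard unit vector e_{i+1} ∈ ℝ^{n+1} satisfies: ‖B_n^l e_{i+1}‖₁ = (Σ_{j=0}^{i} C(n, j))^l if i ≤ ⌊n/2⌋, and ‖B_n^l e_{i+1}‖₁ = (Σ_{j=0}^{⌊n/2⌋} C(n, j))^l + l · Σ_{s=⌊n/2⌋+1}^{i} (Σ_{j=0}^{n-s} C(n, j))^{l-1} C(n, n-s) if i > ⌊n/2⌋. -/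

import Mathlib

open Matrix

/-- Tail sum `∑_{j ≥ J} v j` of a histogram. -/
noncomputable def tailSum (v : ℕ → ℕ) (J : ℕ) : ℕ :=
  ∑' j : ℕ, if J ≤ j then v j else 0

/-- The clipping function `cl_k`: all mass at indices `≥ k` is moved to index `k`. -/
noncomputable def clip (k : ℕ) (v : ℕ → ℕ) : ℕ → ℕ :=
  fun i => if i < k then v i else if i = k then tailSum v k else 0

/-- The binomial collection `γ̃_{m,n} = ∑_{j=0}^{m} C(n, j) e_{n-j}`
(accessed as `binomGamma n m`). -/
def binomGamma (n m : ℕ) : ℕ → ℕ :=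
  fun i => ∑ j ∈ Finset.range (m + 1), if i = n - j then n.choose j else 0

/-- The binomial bound matrix `B_n ∈ ℕ^{(n+1)×(n+1)}` (as a real matrix), with
(0-indexed) entries `(B_n)_{i,j} = (cl_j(γ̃_{j,n}))_i`. -/
noncomputable def binomBoundMatrix (n : ℕ) : Matrix (Fin (n + 1)) (Fin (n + 1)) ℝ :=
  fun i j => (clip j.val (binomGamma n j.val) i.val : ℕ)

/-!
Column `j` of `B_n` is the clipped collection `∑_{t ≤ j} C(n, t) e_{min(n - t, j)}`. For `j ≤ ⌊n/2⌋`
every index `n - t` is at least `j`, so `e_j` is an eigenvector with eigenvalue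
`S_j = ∑_{t ≤ j} C(n, t)`. For `j > ⌊n/2⌋` the columns `j` and `j - 1` differ only in the terms
with `t ≤ n - j`, which gives `B (e_j - e_{j-1}) = S_{n-j} (e_j - e_{j-1}) + C(n, n - j) e_{n-j}`,
where `e_{n-j}` is an eigenvector for the same eigenvalue `S_{n-j}`. This is a Jordan block, so
the coordinate sum of `B^l e_j` exceeds that of `B^l e_{j-1}` by `l S_{n-j}^{l-1} C(n, n - j)`.
All entries of `B` are nonnegative, so the L1 norm is the coordinate sum.
-/

open Finset

lemma tailSum_sum_ite {ι : Type*} (s : Finset ι) (p c : ι → ℕ) (k : ℕ) :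
    tailSum (fun x => ∑ t ∈ s, if x = p t then c t else 0) k =
      ∑ t ∈ s, if k ≤ p t then c t else 0 := by
  have hterm : ∀ x, (if k ≤ x then ∑ t ∈ s, (if x = p t then c t else 0) else 0) =
      ∑ t ∈ s, if x = p t then (if k ≤ p t then c t else 0) else 0 := by
    intro x
    split_ifs with hx
    · exact sum_congr rfl fun t _ => by split_ifs <;> simp_all
    · exact (sum_eq_zero fun t _ => by split_ifs <;> simp_all).symm
  rw [tailSum, tsum_congr hterm, Summable.tsum_finsetSum fun t _ => (hasSum_ite_eq _ _).summable]
  simp only [tsum_ite_eq]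

lemma clip_sum_ite {ι : Type*} (k : ℕ) (s : Finset ι) (p c : ι → ℕ) (i : ℕ) :
    clip k (fun x => ∑ t ∈ s, if x = p t then c t else 0) i =
      ∑ t ∈ s, if i = min (p t) k then c t else 0 := by
  unfold clip
  rw [tailSum_sum_ite]
  split_ifs with hlt heq
  · exact sum_congr rfl fun t _ => if_congr (by omega) rfl rfl
  · exact sum_congr rfl fun t _ => if_congr (by omega) rfl rfl
  · exact (sum_eq_zero fun t _ => if_neg (by omega)).symm

lemma binomBoundMatrix_apply (n : ℕ) (k j : Fin (n + 1)) :
    binomBoundMatrix n k j =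
      ∑ t ∈ range (j + 1), if (k : ℕ) = min (n - t) j then (n.choose t : ℝ) else 0 := by
  unfold binomBoundMatrix binomGamma
  rw [clip_sum_ite]
  push_cast
  rfl

/-- Indexed by `ℕ` so that indices such as `min (n - t) j` need no `Fin` casts; `0` when `m > n`. -/
def unitVec (n m : ℕ) : Fin (n + 1) → ℝ := fun k => if (k : ℕ) = m then 1 else 0

noncomputable def binomPartialSum (n i : ℕ) : ℝ := ∑ j ∈ range (i + 1), (n.choose j : ℝ)

lemma unitVec_eq_single {n m : ℕ} (h : m ≤ n) : unitVec n m = Pi.single ⟨m, by omega⟩ 1 := by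
  ext k
  simp [unitVec, Pi.single_apply, Fin.ext_iff]

lemma sum_unitVec {n m : ℕ} (h : m ≤ n) : ∑ k, unitVec n m k = 1 := by
  simp [unitVec_eq_single h]

lemma unitVec_nonneg (n m : ℕ) : 0 ≤ unitVec n m := fun k => by
  unfold unitVec
  split_ifs <;> norm_num

section Jordan

variable {ι R : Type*} [Fintype ι] [DecidableEq ι] [CommSemiring R] {A : Matrix ι ι R}
  {v w : ι → R} {a c : R}

lemma pow_mulVec_of_mulVec_eq_smul (hw : A *ᵥ w = a • w) (l : ℕ) : A ^ l *ᵥ w = a ^ l • w := by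
  induction l with
  | zero => simp
  | succ l ih => rw [pow_succ', ← mulVec_mulVec, ih, mulVec_smul, hw, smul_smul, pow_succ]

lemma pow_mulVec_of_mulVec_eq_smul_add_smul (hv : A *ᵥ v = a • v + c • w) (hw : A *ᵥ w = a • w)
    (l : ℕ) : A ^ l *ᵥ v = a ^ l • v + ((l : R) * a ^ (l - 1) * c) • w := by
  induction l with
  | zero => simp
  | succ l ih =>
    rw [pow_succ', ← mulVec_mulVec, ih, mulVec_add, mulVec_smul, mulVec_smul, hv, hw, smul_add,
      smul_smul, smul_smul, smul_smul, add_assoc, ← add_smul, pow_succ]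
    congr 2
    rcases l with _ | l
    · simp
    · push_cast
      ring

end Jordan

lemma pow_mulVec_nonneg {ι R : Type*} [Fintype ι] [DecidableEq ι] [CommSemiring R] [PartialOrder R]
    [IsOrderedRing R] {A : Matrix ι ι R} (hA : ∀ i j, 0 ≤ A i j) {v : ι → R} (hv : 0 ≤ v)
    (l : ℕ) : 0 ≤ A ^ l *ᵥ v := by
  induction l with
  | zero => simpa using hv
  | succ l ih =>
    rw [pow_succ', ← mulVec_mulVec]
    exact fun i => sum_nonneg fun j _ => mul_nonneg (hA i j) (ih j)

section BinomBoundMatrix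

variable {n : ℕ}

lemma binomBoundMatrix_mulVec_unitVec {j : ℕ} (hj : j ≤ n) :
    binomBoundMatrix n *ᵥ unitVec n j =
      ∑ t ∈ range (j + 1), (n.choose t : ℝ) • unitVec n (min (n - t) j) := by
  ext k
  rw [unitVec_eq_single hj, mulVec_single_one, col_apply, binomBoundMatrix_apply, Finset.sum_apply]
  simp only [Pi.smul_apply, smul_eq_mul, unitVec, mul_ite, mul_one, mul_zero]

lemma binomBoundMatrix_mulVec_unitVec_of_le_half {j : ℕ} (hj : j ≤ n / 2) :
    binomBoundMatrix n *ᵥ unitVec n j = binomPartialSum n j • unitVec n j := by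
  rw [binomBoundMatrix_mulVec_unitVec (by omega), binomPartialSum, sum_smul]
  refine sum_congr rfl fun t ht => ?_
  rw [min_eq_right (by simp only [mem_range] at ht; omega)]

lemma binomBoundMatrix_mulVec_unitVec_succ_sub {i : ℕ} (h₁ : n / 2 ≤ i) (h₂ : i < n) :
    binomBoundMatrix n *ᵥ (unitVec n (i + 1) - unitVec n i) =
      binomPartialSum n (n - (i + 1)) • (unitVec n (i + 1) - unitVec n i) +
        (n.choose (n - (i + 1)) : ℝ) • unitVec n (n - (i + 1)) := by
  rw [mulVec_sub, binomBoundMatrix_mulVec_unitVec h₂, binomBoundMatrix_mulVec_unitVec h₂.le,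
    sum_range_succ, add_sub_right_comm, ← sum_sub_distrib, min_eq_left (by omega),
    Nat.choose_symm h₂, binomPartialSum, sum_smul]
  congr 1
  refine (sum_subset (range_subset_range.2 (by omega)) fun t ht hnot => ?_).symm.trans
    (sum_congr rfl fun t ht => ?_)
  · simp only [mem_range] at ht hnot
    rw [min_eq_left (by omega), min_eq_left (by omega), sub_self]
  · simp only [mem_range] at ht
    rw [min_eq_right (by omega), min_eq_right (by omega), smul_sub]

lemma sum_pow_mulVec_unitVec_of_le_half (l : ℕ) {i : ℕ} (hi : i ≤ n / 2) :
    ∑ k, (binomBoundMatrix n ^ l *ᵥ unitVec n i) k = binomPartialSum n i ^ l := by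
  rw [pow_mulVec_of_mulVec_eq_smul (binomBoundMatrix_mulVec_unitVec_of_le_half hi)]
  simp only [Pi.smul_apply, smul_eq_mul, ← mul_sum, sum_unitVec (hi.trans (Nat.div_le_self n 2)),
    mul_one]

lemma sum_pow_mulVec_unitVec_succ (l : ℕ) {i : ℕ} (h₁ : n / 2 ≤ i) (h₂ : i < n) :
    ∑ k, (binomBoundMatrix n ^ l *ᵥ unitVec n (i + 1)) k =
      ∑ k, (binomBoundMatrix n ^ l *ᵥ unitVec n i) k +
        l * binomPartialSum n (n - (i + 1)) ^ (l - 1) * (n.choose (n - (i + 1)) : ℝ) := by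
  have hjordan := pow_mulVec_of_mulVec_eq_smul_add_smul
    (binomBoundMatrix_mulVec_unitVec_succ_sub h₁ h₂)
    (binomBoundMatrix_mulVec_unitVec_of_le_half (by omega)) l
  have hmass := congrArg (fun v => ∑ k, v k) hjordan
  simp only [mulVec_sub, Pi.add_apply, Pi.sub_apply, Pi.smul_apply, smul_eq_mul, sum_add_distrib,
    sum_sub_distrib, ← mul_sum, sum_unitVec h₂, sum_unitVec h₂.le,
    sum_unitVec (Nat.sub_le n (i + 1))] at hmass
  linarith

lemma sum_pow_mulVec_unitVec_of_half_le (l : ℕ) {i : ℕ} (h₁ : n / 2 ≤ i) (h₂ : i ≤ n) :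
    ∑ k, (binomBoundMatrix n ^ l *ᵥ unitVec n i) k =
      binomPartialSum n (n / 2) ^ l + l * ∑ s ∈ Icc (n / 2 + 1) i,
        binomPartialSum n (n - s) ^ (l - 1) * (n.choose (n - s) : ℝ) := by
  induction i, h₁ using Nat.le_induction with
  | base => simp [sum_pow_mulVec_unitVec_of_le_half l le_rfl]
  | succ i h ih =>
    rw [sum_pow_mulVec_unitVec_succ l h h₂, ih (by omega), sum_Icc_succ_top (by omega)]
    ring

end BinomBoundMatrix

theorem stmt19_general (n : ℕ) (l : ℕ) (i : ℕ) (hi : i ≤ n) :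
    (∑ k : Fin (n + 1),
        |((binomBoundMatrix n ^ l) *ᵥ (fun k : Fin (n + 1) => if k.val = i then (1 : ℝ) else 0)) k|) =
      if i ≤ n / 2 then
        (∑ j ∈ Finset.range (i + 1), (n.choose j : ℝ)) ^ l
      else
        (∑ j ∈ Finset.range (n / 2 + 1), (n.choose j : ℝ)) ^ l +
          l * ∑ s ∈ Finset.Icc (n / 2 + 1) i,
            (∑ j ∈ Finset.range (n - s + 1), (n.choose j : ℝ)) ^ (l - 1) * (n.choose (n - s) : ℝ) := by
  have hnonneg := pow_mulVec_nonneg (A := binomBoundMatrix n) (fun _ _ => Nat.cast_nonneg _)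
    (unitVec_nonneg n i) l
  change ∑ k, |(binomBoundMatrix n ^ l *ᵥ unitVec n i) k| = _
  simp_rw [abs_of_nonneg (hnonneg _)]
  split_ifs with h
  · exact sum_pow_mulVec_unitVec_of_le_half l h
  · exact sum_pow_mulVec_unitVec_of_half_le l (by omega) hi

/-- For `n ∈ ℕ₊`, `l ≥ 1` and `i ∈ {0, …, n}`, the L1 norm of `B_n^l` applied to the
standard unit vector `e_{i+1} ∈ ℝ^{n+1}` (with 1 in its `(i+1)`-st entry, 1-indexed) equals
`(∑_{j=0}^{i} C(n,j))^l` if `i ≤ ⌊n/2⌋`, and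
`(∑_{j=0}^{⌊n/2⌋} C(n,j))^l + l ∑_{s=⌊n/2⌋+1}^{i} (∑_{j=0}^{n-s} C(n,j))^{l-1} C(n,n-s)`
if `i > ⌊n/2⌋`. -/
theorem stmt19 (n : ℕ) (hn : 0 < n) (l : ℕ) (hl : 1 ≤ l) (i : ℕ) (hi : i ≤ n) :
    (∑ k : Fin (n + 1),
        |((binomBoundMatrix n ^ l) *ᵥ (fun k : Fin (n + 1) => if k.val = i then (1 : ℝ) else 0)) k|) =
      if i ≤ n / 2 then
        (∑ j ∈ Finset.range (i + 1), (n.choose j : ℝ)) ^ l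
      else
        (∑ j ∈ Finset.range (n / 2 + 1), (n.choose j : ℝ)) ^ l +
          l * ∑ s ∈ Finset.Icc (n / 2 + 1) i,
            (∑ j ∈ Finset.range (n - s + 1), (n.choose j : ℝ)) ^ (l - 1) * (n.choose (n - s) : ℝ) :=
  stmt19_general n l i hi
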